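/- arXiv:1902.09786 — 3 statements merged into one kernel-verified Lean document; each statement's English description precedes it below -/
import Mathlib

section
/- Liouville's formula for the flow-map gradient: let n ≥ 1, let A : ℝ → Matrix (Fin n) (Fin n) ℝ be continuous, let t₀ ∈ ℝ, and let M : ℝ → Matrix (Fin n) (Fin n) ℝ be differentiable with M(t₀) = 1 (the identity matrix) and M'(t) = A(t) * M(t) for all t. Then for every t, det (M(t)) = exp (∫_{t₀}^{t} trace (A(s)) ds). -/
/-!
Differentiating the determinant row by row (Jacobi's formula), the derivative of `det M` is
`∑ i, det (M with row i replaced by row i of A M)`; by multilinearity that summand is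
`A i i * det M`, so `det M` solves the scalar equation `f' = tr A · f` with `f t₀ = 1`.
An integrating factor `exp (-∫ tr A)` makes the product constant.
-/

namespace Matrix

variable {𝕜 : Type*} [NontriviallyNormedField 𝕜] {ι : Type*} [Fintype ι] [DecidableEq ι]

def detRowContinuousMultilinear : ContinuousMultilinearMap 𝕜 (fun _ : ι => ι → 𝕜) 𝕜 where
  toMultilinearMap := (detRowAlternating : (ι → 𝕜) [⋀^ι]→ₗ[𝕜] 𝕜).toMultilinearMap
  cont := continuous_id.matrix_det

theorem hasDerivAt_det {M : 𝕜 → Matrix ι ι 𝕜} {M' : Matrix ι ι 𝕜} {t : 𝕜}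
    (hM : ∀ i j, HasDerivAt (fun s => M s i j) (M' i j) t) :
    HasDerivAt (fun s => (M s).det) (∑ i, ((M t).updateRow i (M' i)).det) t := by
  have hrows : HasDerivAt (fun s i => M s i) (fun i => M' i) t :=
    hasDerivAt_pi.2 fun i => hasDerivAt_pi.2 (hM i)
  have hdet := (detRowContinuousMultilinear.hasFDerivAt (fun i => M t i)).comp_hasDerivAt t hrows
  rwa [ContinuousMultilinearMap.linearDeriv_apply] at hdet

theorem det_updateRow_mul_row {R : Type*} [CommRing R] (A M : Matrix ι ι R) (i : ι) :
    (M.updateRow i ((A * M) i)).det = A i i * M.det := by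
  have hrow : (A * M) i = ∑ k, A i k • M k := by
    ext j
    simp [mul_apply]
  simp [hrow, det_updateRow_sum]

theorem sum_det_updateRow_mul_row {R : Type*} [CommRing R] (A M : Matrix ι ι R) :
    ∑ i, (M.updateRow i ((A * M) i)).det = A.trace * M.det := by
  simp only [det_updateRow_mul_row, trace, diag, Finset.sum_mul]

theorem hasDerivAt_det_of_hasDerivAt_mul {M : 𝕜 → Matrix ι ι 𝕜} {A : Matrix ι ι 𝕜} {t : 𝕜}
    (hM : ∀ i j, HasDerivAt (fun s => M s i j) ((A * M t) i j) t) :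
    HasDerivAt (fun s => (M s).det) (A.trace * (M t).det) t := by
  simpa only [sum_det_updateRow_mul_row] using hasDerivAt_det hM

end Matrix

theorem eq_mul_exp_integral_of_hasDerivAt {f c : ℝ → ℝ} (hc : Continuous c)
    (hf : ∀ u, HasDerivAt f (c u * f u) u) (t₀ t : ℝ) :
    f t = f t₀ * Real.exp (∫ s in t₀..t, c s) := by
  set I : ℝ → ℝ := fun u => ∫ s in t₀..u, c s
  have hI : ∀ u, HasDerivAt I (c u) u := fun u =>
    (hc.integral_hasStrictDerivAt t₀ u).hasDerivAt
  have hconst : ∀ u, HasDerivAt (fun u => f u * Real.exp (-I u)) 0 u := fun u =>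
    ((hf u).mul (hI u).neg.exp).congr_deriv (by ring)
  have hft := is_const_of_deriv_eq_zero (fun u => (hconst u).differentiableAt)
      (fun u => (hconst u).deriv) t t₀
  simp only [I, intervalIntegral.integral_same, neg_zero, Real.exp_zero, mul_one] at hft
  rw [← hft, mul_assoc, ← Real.exp_add, neg_add_cancel, Real.exp_zero, mul_one]

theorem liouville_formula_flow_map_gradient_general
    (n : ℕ)
    (A : ℝ → Matrix (Fin n) (Fin n) ℝ) (hA : Continuous A)
    (t₀ : ℝ)
    (M : ℝ → Matrix (Fin n) (Fin n) ℝ)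
    (hM0 : M t₀ = 1)
    (hM : ∀ t, ∀ i j : Fin n, HasDerivAt (fun s => M s i j) ((A t * M t) i j) t) :
    ∀ t : ℝ, (M t).det = Real.exp (∫ s in t₀..t, (A s).trace) := by
  intro t
  have hdet := eq_mul_exp_integral_of_hasDerivAt hA.matrix_trace
    (fun u => Matrix.hasDerivAt_det_of_hasDerivAt_mul (hM u)) t₀ t
  rwa [hM0, Matrix.det_one, one_mul] at hdet

/-- **Liouville's formula for the flow-map gradient.**
Let `n ≥ 1`, let `A : ℝ → Matrix (Fin n) (Fin n) ℝ` be continuous, let `t₀ ∈ ℝ`, and let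
`M : ℝ → Matrix (Fin n) (Fin n) ℝ` be differentiable (entrywise) with `M t₀ = 1` and
`M' t = A t * M t` for all `t`.  Then for every `t`,
`det (M t) = exp (∫ s in t₀..t, trace (A s))`. -/
theorem liouville_formula_flow_map_gradient
    (n : ℕ) (hn : 1 ≤ n)
    (A : ℝ → Matrix (Fin n) (Fin n) ℝ) (hA : Continuous A)
    (t₀ : ℝ)
    (M : ℝ → Matrix (Fin n) (Fin n) ℝ)
    (hM0 : M t₀ = 1)
    (hM : ∀ t, ∀ i j : Fin n, HasDerivAt (fun s => M s i j) ((A t * M t) i j) t) :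
    ∀ t : ℝ, (M t).det = Real.exp (∫ s in t₀..t, (A s).trace) :=
  liouville_formula_flow_map_gradient_general n A hA t₀ M hM0 hM
end

section
/- Proposition (no closed constrained uniform barriers where A^± has definite symmetric part): let Ω denote the 2×2 rotation matrix with rows (0, 1) and (−1, 0), and let I denote the 2×2 identity matrix. Let c₀ : ℝ² → ℝ be C¹, let T̄ : ℝ² → Matrix (Fin 2) (Fin 2) ℝ be continuous with T̄(x) symmetric positive definite for all x, let 𝒯₀ ≥ 0, and fix a sign ε ∈ {+1, −1}. Let D ⊆ ℝ² be a set such that for every x ∈ D: ∇c₀(x) ≠ 0, ‖T̄(x)∇c₀(x)‖ ≥ 𝒯₀, and the symmetric part of the matrix A(x) := (𝒯₀ Ω + ε √(‖T̄(x)∇c₀(x)‖² − 𝒯₀²) I) T̄(x) is positive definite (or negative definite, uniformly over D). Then any differentiable x : ℝ → ℝ² with x'(s) = (1/‖T̄(x(s))∇c₀(x(s))‖²) A(x(s)) ∇c₀(x(s)) and x(s) ∈ D for all s is not periodic: there is no p > 0 with x(s + p) = x(s) for all s. -/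
/-! `c₀` is a strict Lyapunov function for the barrier ODE: along a solution,
`d/ds c₀ (x s) = ‖T̄ ∇c₀‖⁻² ⟪∇c₀, A ∇c₀⟫`, and this never vanishes because `∇c₀ ≠ 0`, `T̄` is
invertible and `⟪v, A v⟫` is the quadratic form of the definite symmetric part of `A`.
A periodic solution would make `c₀ ∘ x` periodic, and Rolle's theorem would then produce a
critical point of `c₀ ∘ x`. -/

open Matrix
open scoped RealInnerProductSpace

theorem Function.Periodic.exists_hasDerivAt_eq_zero {g g' : ℝ → ℝ} {p : ℝ}
    (hg : Function.Periodic g p) (hp : 0 < p) (hder : ∀ s, HasDerivAt g (g' s) s) :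
    ∃ s, g' s = 0 :=
  let ⟨s, _, hs⟩ := _root_.exists_hasDerivAt_eq_zero hp
    (fun s _ ↦ (hder s).continuousAt.continuousWithinAt) (by simpa using (hg 0).symm)
    (fun s _ ↦ hder s)
  ⟨s, hs⟩

theorem HasGradientAt.comp_hasDerivAt_inner {E : Type*} [NormedAddCommGroup E]
    [InnerProductSpace ℝ E] [CompleteSpace E] {f : E → ℝ} {f' : E} {x : ℝ → E} {x' : E} {s : ℝ}
    (hf : HasGradientAt f f' (x s)) (hx : HasDerivAt x x' s) :
    HasDerivAt (f ∘ x) ⟪f', x'⟫ s := by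
  simpa using hf.hasFDerivAt.comp_hasDerivAt s hx

theorem not_periodic_of_inner_gradient_ne_zero {E : Type*} [NormedAddCommGroup E]
    [InnerProductSpace ℝ E] [CompleteSpace E] {f : E → ℝ} {f' : E → E} {x x' : ℝ → E}
    (hf : ∀ s, HasGradientAt f (f' (x s)) (x s)) (hx : ∀ s, HasDerivAt x (x' s) s)
    (hne : ∀ s, ⟪f' (x s), x' s⟫ ≠ 0) :
    ¬ ∃ p, 0 < p ∧ Function.Periodic x p := by
  rintro ⟨p, hp, hper⟩
  obtain ⟨s, hs⟩ := (hper.comp f).exists_hasDerivAt_eq_zero hp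
    fun s ↦ (hf s).comp_hasDerivAt_inner (hx s)
  exact hne s hs

theorem EuclideanSpace.inner_toEuclideanLin {n : Type*} [Fintype n] [DecidableEq n]
    (M : Matrix n n ℝ) (v w : EuclideanSpace ℝ n) :
    ⟪v, toEuclideanLin M w⟫ = WithLp.ofLp v ⬝ᵥ (M *ᵥ WithLp.ofLp w) := by
  rw [EuclideanSpace.inner_eq_star_dotProduct, dotProduct_comm]
  rfl

theorem Matrix.PosDef.toEuclideanLin_ne_zero {n : Type*} [Fintype n] [DecidableEq n]
    {M : Matrix n n ℝ} (hM : M.PosDef) {v : EuclideanSpace ℝ n} (hv : v ≠ 0) :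
    toEuclideanLin M v ≠ 0 := fun h ↦
  hv <| WithLp.ofLp_injective 2 <| mulVec_injective_iff_isUnit.mpr hM.isUnit <|
    (congrArg WithLp.ofLp h).trans (mulVec_zero M).symm

theorem Matrix.dotProduct_mulVec_symmPart {R n : Type*} [Field R] [CharZero R] [Fintype n]
    (A : Matrix n n R) (w : n → R) :
    w ⬝ᵥ (((1 / 2 : R) • (A + Aᵀ)) *ᵥ w) = w ⬝ᵥ (A *ᵥ w) := by
  have h : w ⬝ᵥ (Aᵀ *ᵥ w) = w ⬝ᵥ (A *ᵥ w) := by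
    rw [mulVec_transpose, dotProduct_comm, ← dotProduct_mulVec]
  rw [smul_mulVec, add_mulVec, dotProduct_smul, dotProduct_add, h, smul_eq_mul]
  ring

theorem Matrix.dotProduct_mulVec_ne_zero_of_symmPart_definite {n : Type*} [Fintype n]
    {A : Matrix n n ℝ} (hA : ((1 / 2 : ℝ) • (A + Aᵀ)).PosDef ∨ (-((1 / 2 : ℝ) • (A + Aᵀ))).PosDef)
    {w : n → ℝ} (hw : w ≠ 0) : w ⬝ᵥ (A *ᵥ w) ≠ 0 := by
  rw [← dotProduct_mulVec_symmPart]
  rcases hA with hpos | hneg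
  · exact (hpos.dotProduct_mulVec_pos hw).ne'
  · simpa only [star_trivial, neg_mulVec, dotProduct_neg, ne_eq, neg_eq_zero] using
      (hneg.dotProduct_mulVec_pos hw).ne'

theorem constrained_uniform_barrier_not_periodic_general
    (c₀ : EuclideanSpace ℝ (Fin 2) → ℝ) (hc₀ : ContDiff ℝ 1 c₀)
    (T : EuclideanSpace ℝ (Fin 2) → Matrix (Fin 2) (Fin 2) ℝ)
    (hTpd : ∀ x, (T x).PosDef)
    (A : EuclideanSpace ℝ (Fin 2) → Matrix (Fin 2) (Fin 2) ℝ)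
    (D : Set (EuclideanSpace ℝ (Fin 2)))
    (hDgrad : ∀ x ∈ D, gradient c₀ x ≠ 0)
    (hdef : (∀ x ∈ D, ((1 / 2 : ℝ) • (A x + (A x)ᵀ)).PosDef) ∨
            (∀ x ∈ D, (-((1 / 2 : ℝ) • (A x + (A x)ᵀ))).PosDef))
    (x : ℝ → EuclideanSpace ℝ (Fin 2))
    (hx : ∀ s, HasDerivAt x
      ((‖Matrix.toEuclideanLin (T (x s)) (gradient c₀ (x s))‖ ^ 2)⁻¹ •
        Matrix.toEuclideanLin (A (x s)) (gradient c₀ (x s))) s)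
    (hxD : ∀ s, x s ∈ D) :
    ¬ ∃ p : ℝ, 0 < p ∧ ∀ s, x (s + p) = x s := by
  refine not_periodic_of_inner_gradient_ne_zero
    (fun s ↦ ((hc₀.differentiable one_ne_zero) (x s)).hasGradientAt) hx fun s ↦ ?_
  have hgrad : gradient c₀ (x s) ≠ 0 := hDgrad _ (hxD s)
  have hdef_s := hdef.imp (· _ (hxD s)) (· _ (hxD s))
  rw [real_inner_smul_right, EuclideanSpace.inner_toEuclideanLin]
  exact mul_ne_zero
    (inv_ne_zero <| pow_ne_zero 2 <| norm_ne_zero_iff.mpr <| (hTpd _).toEuclideanLin_ne_zero hgrad)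
    (dotProduct_mulVec_ne_zero_of_symmPart_definite hdef_s <| by simpa using hgrad)

/-- **No closed constrained uniform barriers where `A^±` has definite symmetric part
(Proposition 5.5).**  With `Ω = !![0,1;-1,0]`, `T̄` continuous, symmetric positive definite,
`𝒯₀ ≥ 0`, a fixed sign `ε = ±1`, and `D ⊆ ℝ²` a set on which `∇c₀ ≠ 0`,
`‖T̄∇c₀‖ ≥ 𝒯₀`, and the symmetric part of
`A x = (𝒯₀ Ω + ε √(‖T̄ x ∇c₀ x‖² − 𝒯₀²) I) * T̄ x` is positive definite (or negative
definite, uniformly over `D`), no solution of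
`x' = (1/‖T̄∇c₀‖²) A ∇c₀` staying in `D` is periodic. -/
theorem constrained_uniform_barrier_not_periodic
    (Ω : Matrix (Fin 2) (Fin 2) ℝ) (hΩ : Ω = !![0, 1; -1, 0])
    (c₀ : EuclideanSpace ℝ (Fin 2) → ℝ) (hc₀ : ContDiff ℝ 1 c₀)
    (T : EuclideanSpace ℝ (Fin 2) → Matrix (Fin 2) (Fin 2) ℝ)
    (hTcont : Continuous T)
    (hTpd : ∀ x, (T x).PosDef)
    (𝒯₀ : ℝ) (h𝒯₀ : 0 ≤ 𝒯₀)
    (ε : ℝ) (hε : ε = 1 ∨ ε = -1)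
    (A : EuclideanSpace ℝ (Fin 2) → Matrix (Fin 2) (Fin 2) ℝ)
    (hA : ∀ x, A x =
      (𝒯₀ • Ω +
        (ε * Real.sqrt (‖Matrix.toEuclideanLin (T x) (gradient c₀ x)‖ ^ 2 - 𝒯₀ ^ 2)) •
          (1 : Matrix (Fin 2) (Fin 2) ℝ)) * T x)
    (D : Set (EuclideanSpace ℝ (Fin 2)))
    (hDgrad : ∀ x ∈ D, gradient c₀ x ≠ 0)
    (hDnorm : ∀ x ∈ D, 𝒯₀ ≤ ‖Matrix.toEuclideanLin (T x) (gradient c₀ x)‖)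
    (hdef : (∀ x ∈ D, ((1 / 2 : ℝ) • (A x + (A x)ᵀ)).PosDef) ∨
            (∀ x ∈ D, (-((1 / 2 : ℝ) • (A x + (A x)ᵀ))).PosDef))
    (x : ℝ → EuclideanSpace ℝ (Fin 2))
    (hx : ∀ s, HasDerivAt x
      ((‖Matrix.toEuclideanLin (T (x s)) (gradient c₀ (x s))‖ ^ 2)⁻¹ •
        Matrix.toEuclideanLin (A (x s)) (gradient c₀ (x s))) s)
    (hxD : ∀ s, x s ∈ D) :
    ¬ ∃ p : ℝ, 0 < p ∧ ∀ s, x (s + p) = x s :=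
  constrained_uniform_barrier_not_periodic_general c₀ hc₀ T hTpd A D hDgrad hdef x hx hxD
end

section
/- Null directions of the transport tensor in two dimensions (core of Theorem 4.3): let C be a 2×2 real symmetric positive definite matrix with eigenvalues λ₁ < λ₂ and corresponding orthonormal eigenvectors ξ₁, ξ₂ ∈ ℝ² (so C ξᵢ = λᵢ ξᵢ, ‖ξᵢ‖ = 1, ⟨ξ₁, ξ₂⟩ = 0). Set T̄ := (det C) · C⁻¹. For any 𝒯₀ with λ₁ ≤ 𝒯₀ ≤ λ₂ and any sign ε ∈ {+1, −1}, define η := √((λ₂ − 𝒯₀)/(λ₂ − λ₁)) ξ₁ + ε √((𝒯₀ − λ₁)/(λ₂ − λ₁)) ξ₂. Then ‖η‖ = 1, and every unit vector n ∈ ℝ² orthogonal to η satisfies ⟨n, T̄ n⟩ = 𝒯₀, i.e., ⟨n, (T̄ − 𝒯₀ I) n⟩ = 0. Conversely, if e ∈ ℝ² is a unit vector such that every unit vector orthogonal to e satisfies ⟨n, T̄ n⟩ = 𝒯₀, then e = ± η for one of the two sign choices ε. -/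
open Matrix
open scoped RealInnerProductSpace

/-!
In the plane, `det C • C⁻¹` is the adjugate of `C`, and the adjugate is `C` seen through the quarter
turn `J = rot90`: `⟪J v, adj C (J v)⟫ = ⟪v, C v⟫`. The unit normals of a unit vector `e` are `± J e`, so
the condition on the normals of `e` says exactly `⟪e, C e⟫ = 𝒯₀`. Writing `e = a ξ₁ + b ξ₂`, this
is `a² + b² = 1` and `λ₁ a² + λ₂ b² = 𝒯₀`, whose unique solution is
`a² = (λ₂ - 𝒯₀) / (λ₂ - λ₁)`, `b² = (𝒯₀ - λ₁) / (λ₂ - λ₁)`; the four sign choices give `± η (±1)`.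
-/

theorem Matrix.det_smul_inv_eq_adjugate {n α : Type*} [Fintype n] [DecidableEq n] [CommRing α]
    (A : Matrix n n α) (h : IsUnit A.det) : A.det • A⁻¹ = A.adjugate := by
  rw [inv_def, smul_smul, Ring.mul_inverse_cancel _ h, one_smul]

theorem Orthonormal.exists_orthonormalBasis_coe_eq {ι 𝕜 E : Type*} [Fintype ι] [Nonempty ι]
    [RCLike 𝕜] [NormedAddCommGroup E] [InnerProductSpace 𝕜 E] {v : ι → E}
    (hv : Orthonormal 𝕜 v) (card_eq : Fintype.card ι = Module.finrank 𝕜 E) :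
    ∃ b : OrthonormalBasis ι 𝕜 E, ⇑b = v :=
  ⟨(basisOfOrthonormalOfCardEqFinrank hv card_eq).toOrthonormalBasis
      (by rwa [coe_basisOfOrthonormalOfCardEqFinrank]), by simp⟩

theorem OrthonormalBasis.inner_map_self_eq_sum {ι E : Type*} [Fintype ι] [NormedAddCommGroup E]
    [InnerProductSpace ℝ E] (b : OrthonormalBasis ι ℝ E) {f : E →ₗ[ℝ] E} {μ : ι → ℝ}
    (hf : ∀ i, f (b i) = μ i • b i) (v : E) : ⟪v, f v⟫ = ∑ i, μ i * ⟪b i, v⟫ ^ 2 := by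
  have hfv : f v = ∑ i, (μ i * ⟪b i, v⟫) • b i := by
    conv_lhs => rw [← b.sum_repr' v]
    simp only [map_sum, map_smul, hf, smul_smul, mul_comm]
  rw [hfv, inner_sum]
  refine Finset.sum_congr rfl fun i _ => ?_
  rw [real_inner_smul_right, real_inner_comm]; ring

section OrthonormalPair

variable {E : Type*} [NormedAddCommGroup E] [InnerProductSpace ℝ E] {ξ₁ ξ₂ : E}

theorem Orthonormal.inner_smul_add_inner_smul_eq (hξ : Orthonormal ℝ ![ξ₁, ξ₂])
    (hE : Module.finrank ℝ E = 2) (v : E) : ⟪ξ₁, v⟫ • ξ₁ + ⟪ξ₂, v⟫ • ξ₂ = v := by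
  obtain ⟨b, hb⟩ := hξ.exists_orthonormalBasis_coe_eq (by simp [hE])
  simpa [hb, Fin.sum_univ_two] using b.sum_repr' v

theorem Orthonormal.sq_inner_add_sq_inner_eq_norm_sq (hξ : Orthonormal ℝ ![ξ₁, ξ₂])
    (hE : Module.finrank ℝ E = 2) (v : E) : ⟪ξ₁, v⟫ ^ 2 + ⟪ξ₂, v⟫ ^ 2 = ‖v‖ ^ 2 := by
  obtain ⟨b, hb⟩ := hξ.exists_orthonormalBasis_coe_eq (by simp [hE])
  simpa [hb, Fin.sum_univ_two] using b.sum_sq_inner_right v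

theorem Orthonormal.inner_map_self_eq_of_eigen (hξ : Orthonormal ℝ ![ξ₁, ξ₂])
    (hE : Module.finrank ℝ E = 2) {f : E →ₗ[ℝ] E} {μ₁ μ₂ : ℝ} (h₁ : f ξ₁ = μ₁ • ξ₁)
    (h₂ : f ξ₂ = μ₂ • ξ₂) (v : E) : ⟪v, f v⟫ = μ₁ * ⟪ξ₁, v⟫ ^ 2 + μ₂ * ⟪ξ₂, v⟫ ^ 2 := by
  obtain ⟨b, hb⟩ := hξ.exists_orthonormalBasis_coe_eq (by simp [hE])
  simpa [hb, Fin.sum_univ_two] using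
    b.inner_map_self_eq_sum (μ := ![μ₁, μ₂]) (by simp [hb, Fin.forall_fin_two, h₁, h₂]) v

end OrthonormalPair

theorem exists_sign_smul_add_smul_eq {M : Type*} [AddCommGroup M] [Module ℝ M] {a b α β : ℝ}
    (x y : M) (ha : a ^ 2 = α ^ 2) (hb : b ^ 2 = β ^ 2) :
    ∃ δ : ℝ, (δ = 1 ∨ δ = -1) ∧
      (a • x + b • y = α • x + δ • β • y ∨ a • x + b • y = -(α • x + δ • β • y)) := by
  rcases sq_eq_sq_iff_eq_or_eq_neg.1 ha with rfl | rfl <;>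
    rcases sq_eq_sq_iff_eq_or_eq_neg.1 hb with rfl | rfl
  · exact ⟨1, .inl rfl, .inl (by module)⟩
  · exact ⟨-1, .inr rfl, .inl (by module)⟩
  · exact ⟨-1, .inr rfl, .inr (by module)⟩
  · exact ⟨1, .inl rfl, .inr (by module)⟩

theorem add_eq_one_and_mul_add_mul_eq_iff {K : Type*} [Field K] {l₁ l₂ t x y : K}
    (h : l₁ ≠ l₂) :
    (x + y = 1 ∧ l₁ * x + l₂ * y = t) ↔
      x = (l₂ - t) / (l₂ - l₁) ∧ y = (t - l₁) / (l₂ - l₁) := by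
  have h' : l₂ - l₁ ≠ 0 := sub_ne_zero.2 h.symm
  constructor
  · rintro ⟨hsum, hval⟩
    rw [eq_div_iff h', eq_div_iff h']
    exact ⟨by linear_combination l₂ * hsum - hval, by linear_combination hval - l₁ * hsum⟩
  · rintro ⟨rfl, rfl⟩
    constructor <;> field_simp <;> ring

theorem EuclideanSpace.real_inner_fin_two (x y : EuclideanSpace ℝ (Fin 2)) :
    ⟪x, y⟫ = x 0 * y 0 + x 1 * y 1 := by
  simp [PiLp.inner_apply, Fin.sum_univ_two, mul_comm]

theorem EuclideanSpace.norm_sq_fin_two (x : EuclideanSpace ℝ (Fin 2)) :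
    ‖x‖ ^ 2 = x 0 ^ 2 + x 1 ^ 2 := by
  rw [← real_inner_self_eq_norm_sq, real_inner_fin_two]; ring

def rot90 (v : EuclideanSpace ℝ (Fin 2)) : EuclideanSpace ℝ (Fin 2) := !₂[-v 1, v 0]

@[simp] theorem rot90_apply_zero (v : EuclideanSpace ℝ (Fin 2)) : rot90 v 0 = -v 1 := rfl
@[simp] theorem rot90_apply_one (v : EuclideanSpace ℝ (Fin 2)) : rot90 v 1 = v 0 := rfl

theorem inner_rot90_self (v : EuclideanSpace ℝ (Fin 2)) : ⟪rot90 v, v⟫ = 0 := by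
  rw [EuclideanSpace.real_inner_fin_two, rot90_apply_zero, rot90_apply_one]; ring

theorem norm_rot90 (v : EuclideanSpace ℝ (Fin 2)) : ‖rot90 v‖ = ‖v‖ := by
  rw [← sq_eq_sq₀ (norm_nonneg _) (norm_nonneg _), EuclideanSpace.norm_sq_fin_two,
    EuclideanSpace.norm_sq_fin_two, rot90_apply_zero, rot90_apply_one]; ring

theorem inner_rot90_adjugate_rot90 (C : Matrix (Fin 2) (Fin 2) ℝ) (v : EuclideanSpace ℝ (Fin 2)) :
    ⟪rot90 v, toEuclideanLin C.adjugate (rot90 v)⟫ = ⟪v, toEuclideanLin C v⟫ := by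
  simp only [EuclideanSpace.real_inner_fin_two, toLpLin_apply, mulVec_fin_two, adjugate_fin_two,
    rot90_apply_zero, rot90_apply_one, of_apply, cons_val', cons_val_zero, cons_val_one, empty_val',
    cons_val_fin_one]
  ring

theorem eq_rot90_or_eq_neg_rot90 {n e : EuclideanSpace ℝ (Fin 2)} (hn : ‖n‖ = 1) (he : ‖e‖ = 1)
    (h : ⟪n, e⟫ = 0) : n = rot90 e ∨ n = -rot90 e := by
  have hn2 := EuclideanSpace.norm_sq_fin_two n
  have he2 := EuclideanSpace.norm_sq_fin_two e
  rw [hn] at hn2; rw [he] at he2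
  rw [EuclideanSpace.real_inner_fin_two] at h
  set s := n 1 * e 0 - n 0 * e 1
  have h0 : n 0 = s * -e 1 := by linear_combination n 0 * he2 + e 0 * h
  have h1 : n 1 = s * e 0 := by linear_combination n 1 * he2 + e 1 * h
  have hs : s ^ 2 = 1 := by rw [h0, h1] at hn2; linear_combination -hn2 + s ^ 2 * he2
  rcases sq_eq_one_iff.1 hs with hs | hs
  · left; ext i; fin_cases i <;> simp [h0, h1, hs]
  · right; ext i; fin_cases i <;> simp [h0, h1, hs]

theorem forall_unit_normal_inner_adjugate_iff (C : Matrix (Fin 2) (Fin 2) ℝ)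
    {e : EuclideanSpace ℝ (Fin 2)} (he : ‖e‖ = 1) (t : ℝ) :
    (∀ n : EuclideanSpace ℝ (Fin 2), ‖n‖ = 1 → ⟪n, e⟫ = 0 →
      ⟪n, toEuclideanLin C.adjugate n⟫ = t) ↔ ⟪e, toEuclideanLin C e⟫ = t := by
  refine ⟨fun h => ?_, fun h n hn hne => ?_⟩
  · rw [← inner_rot90_adjugate_rot90]
    exact h _ (by rw [norm_rot90, he]) (inner_rot90_self e)
  · rcases eq_rot90_or_eq_neg_rot90 hn he hne with rfl | rfl
    · rwa [inner_rot90_adjugate_rot90]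
    · rwa [map_neg, inner_neg_neg, inner_rot90_adjugate_rot90]

/-- **Null directions of the transport tensor in two dimensions (core of Theorem 4.3).**
Let `C` be a `2 × 2` real symmetric positive definite matrix with eigenvalues `λ₁ < λ₂` and
orthonormal eigenvectors `ξ₁, ξ₂`, and set `T̄ = (det C) • C⁻¹`.  For `λ₁ ≤ 𝒯₀ ≤ λ₂` and a
sign `δ = ±1`, the vector `η δ = √((λ₂−𝒯₀)/(λ₂−λ₁)) ξ₁ + δ √((𝒯₀−λ₁)/(λ₂−λ₁)) ξ₂` is a unit
vector and every unit normal `n ⊥ η δ` satisfies `⟨n, T̄ n⟩ = 𝒯₀`.  Conversely, any unit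
vector `e` all of whose unit normals satisfy `⟨n, T̄ n⟩ = 𝒯₀` is `± η δ` for some sign `δ`. -/
theorem null_directions_transport_tensor_2D
    (C : Matrix (Fin 2) (Fin 2) ℝ) (hC : C.PosDef)
    (lam₁ lam₂ : ℝ) (hlam : lam₁ < lam₂)
    (ξ₁ ξ₂ : EuclideanSpace ℝ (Fin 2))
    (hξ₁ : Matrix.toEuclideanLin C ξ₁ = lam₁ • ξ₁)
    (hξ₂ : Matrix.toEuclideanLin C ξ₂ = lam₂ • ξ₂)
    (hξ₁norm : ‖ξ₁‖ = 1) (hξ₂norm : ‖ξ₂‖ = 1) (hortho : ⟪ξ₁, ξ₂⟫ = 0)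
    (T : Matrix (Fin 2) (Fin 2) ℝ) (hT : T = C.det • C⁻¹)
    (𝒯₀ : ℝ) (h𝒯₀ : lam₁ ≤ 𝒯₀ ∧ 𝒯₀ ≤ lam₂)
    (η : ℝ → EuclideanSpace ℝ (Fin 2))
    (hη : ∀ δ : ℝ, η δ = Real.sqrt ((lam₂ - 𝒯₀) / (lam₂ - lam₁)) • ξ₁ +
        δ • (Real.sqrt ((𝒯₀ - lam₁) / (lam₂ - lam₁)) • ξ₂)) :
    (∀ δ : ℝ, (δ = 1 ∨ δ = -1) →
      ‖η δ‖ = 1 ∧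
      ∀ nv : EuclideanSpace ℝ (Fin 2), ‖nv‖ = 1 → ⟪nv, η δ⟫ = 0 →
        ⟪nv, Matrix.toEuclideanLin T nv⟫ = 𝒯₀) ∧
    (∀ e : EuclideanSpace ℝ (Fin 2), ‖e‖ = 1 →
      (∀ nv : EuclideanSpace ℝ (Fin 2), ‖nv‖ = 1 → ⟪nv, e⟫ = 0 →
        ⟪nv, Matrix.toEuclideanLin T nv⟫ = 𝒯₀) →
      ∃ δ : ℝ, (δ = 1 ∨ δ = -1) ∧ (e = η δ ∨ e = -η δ)) := by
  obtain ⟨hlo, hhi⟩ := h𝒯₀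
  obtain rfl : T = C.adjugate := hT.trans (C.det_smul_inv_eq_adjugate hC.det_pos.ne'.isUnit)
  have hξ : Orthonormal ℝ ![ξ₁, ξ₂] := by simp [hξ₁norm, hξ₂norm, hortho]
  have hE : Module.finrank ℝ (EuclideanSpace ℝ (Fin 2)) = 2 := by simp
  have hquad := hξ.inner_map_self_eq_of_eigen hE hξ₁ hξ₂
  have hnorm := hξ.sq_inner_add_sq_inner_eq_norm_sq hE
  set α := √((lam₂ - 𝒯₀) / (lam₂ - lam₁))
  set β := √((𝒯₀ - lam₁) / (lam₂ - lam₁))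
  have hweights (x y : ℝ) : (x + y = 1 ∧ lam₁ * x + lam₂ * y = 𝒯₀) ↔ x = α ^ 2 ∧ y = β ^ 2 := by
    rw [Real.sq_sqrt (div_nonneg (by linarith) (by linarith)),
      Real.sq_sqrt (div_nonneg (by linarith) (by linarith))]
    exact add_eq_one_and_mul_add_mul_eq_iff hlam.ne
  refine ⟨fun δ hδ => ?_, fun e he hall => ?_⟩
  · have hcoord₁ : ⟪ξ₁, η δ⟫ = α := by
      simp [hη, inner_add_right, real_inner_smul_right, hortho, hξ₁norm]
    have hcoord₂ : ⟪ξ₂, η δ⟫ = δ * β := by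
      simp [hη, inner_add_right, real_inner_smul_right, real_inner_comm ξ₁ ξ₂, hortho, hξ₂norm]
    obtain ⟨hsum, hval⟩ := (hweights (α ^ 2) ((δ * β) ^ 2)).2
      ⟨rfl, by rw [mul_pow, sq_eq_one_iff.2 hδ, one_mul]⟩
    have hunit : ‖η δ‖ = 1 := by
      rw [← pow_eq_one_iff_of_nonneg (norm_nonneg _) two_ne_zero, ← hnorm, hcoord₁, hcoord₂, hsum]
    refine ⟨hunit, (forall_unit_normal_inner_adjugate_iff C hunit 𝒯₀).2 ?_⟩
    rw [hquad, hcoord₁, hcoord₂, hval]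
  · rw [forall_unit_normal_inner_adjugate_iff C he, hquad] at hall
    obtain ⟨hsq₁, hsq₂⟩ := (hweights _ _).1 ⟨by rw [hnorm, he, one_pow], hall⟩
    obtain ⟨δ, hδ, he_eq⟩ := exists_sign_smul_add_smul_eq ξ₁ ξ₂ hsq₁ hsq₂
    rw [hξ.inner_smul_add_inner_smul_eq hE] at he_eq
    exact ⟨δ, hδ, by rwa [hη]⟩
end
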